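/- With the hypotheses of the Buchberger degree-bound setting (deg f_i ≤ d, B₀ = F, B_{n+1} = B_n ∪ S_{B_n}, graded monomial order), every element b ∈ B_n satisfies deg(lt(b)) ≤ 3ⁿ·d, i.e., deg(b) ≤ 3ⁿ·d. -/

import Mathlib

open MvPolynomial
open scoped Classical

/-- The leading monomial (exponent vector) of a polynomial with respect to a
monomial order `ord`; `lmon ord 0 = 0` by convention. -/
noncomputable def lmon {K : Type*} [Field K] {m : ℕ}
    (ord : LinearOrder (Fin m →₀ ℕ)) (f : MvPolynomial (Fin m) K) : Fin m →₀ ℕ :=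
  if h : f = 0 then 0 else
    @Finset.max' _ ord f.support (MvPolynomial.support_nonempty.mpr h)

/-- The S-polynomial S(f,g) = (x^γ/lt(f))·f − (x^γ/lt(g))·g, where
x^γ = lcm(lm f, lm g), i.e. γ = lm f ⊔ lm g (componentwise max). -/
noncomputable def spoly {K : Type*} [Field K] {m : ℕ}
    (ord : LinearOrder (Fin m →₀ ℕ)) (f g : MvPolynomial (Fin m) K) :
    MvPolynomial (Fin m) K :=
  (monomial ((lmon ord f ⊔ lmon ord g) - lmon ord f)) (f.coeff (lmon ord f))⁻¹ * f -
    (monomial ((lmon ord f ⊔ lmon ord g) - lmon ord g)) (g.coeff (lmon ord g))⁻¹ * g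

/-- `IsRemainder ord f B r`: `r` is a possible remainder of `f` on multivariate
division by the finite set `B`: `f = Σ_{g ∈ B} a_g g + r` with
`lm(a_g g) ≼ lm f` for all nonzero summands, and `r` reduced modulo `B`
(no leading monomial of an element of `B` divides a monomial of `r`). -/
def IsRemainder {K : Type*} [Field K] {m : ℕ}
    (ord : LinearOrder (Fin m →₀ ℕ)) (f : MvPolynomial (Fin m) K)
    (B : Finset (MvPolynomial (Fin m) K)) (r : MvPolynomial (Fin m) K) : Prop :=
  ∃ a : MvPolynomial (Fin m) K → MvPolynomial (Fin m) K,
    f = (∑ g ∈ B, a g * g) + r ∧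
    (∀ g ∈ B, a g * g ≠ 0 → ord.le (lmon ord (a g * g)) (lmon ord f)) ∧
    (∀ g ∈ B, g ≠ 0 → ∀ β ∈ r.support, ¬ lmon ord g ≤ β)

/-!
An S-polynomial of `p` and `q` has degree at most
`deg p + deg q`, because the monomial multiplying `p` divides `lm q` (and symmetrically).
Reducing modulo `B` cannot raise the degree: each summand `a_g g` has leading monomial below
that of the dividend, and the order is graded. So one round of Buchberger's algorithm at
most doubles the degree bound, and `2 · 3ⁿ d ≤ 3ⁿ⁺¹ d`.
-/

section
variable {K : Type*} [Field K] {m : ℕ} (ord : LinearOrder (Fin m →₀ ℕ))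

lemma sum_lmon_le_totalDegree (f : MvPolynomial (Fin m) K) :
    ∑ x, lmon ord f x ≤ f.totalDegree := by
  unfold lmon
  split_ifs with hf
  · simp
  · have hmem := @Finset.max'_mem _ ord f.support (support_nonempty.mpr hf)
    have h := le_totalDegree hmem
    rwa [Finsupp.sum_fintype _ _ (fun _ => rfl)] at h

lemma totalDegree_le_sum_lmon
    (hgraded : ∀ a b : Fin m →₀ ℕ, ord.le a b → ∑ x, a x ≤ ∑ x, b x)
    (f : MvPolynomial (Fin m) K) :
    f.totalDegree ≤ ∑ x, lmon ord f x := by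
  refine Finset.sup_le fun s hs => ?_
  have hf : f ≠ 0 := by rintro rfl; simp at hs
  have hle : ord.le s (lmon ord f) := by
    rw [lmon, dif_neg hf]
    exact @Finset.le_max' _ ord _ _ hs
  rw [Finsupp.sum_fintype _ _ (fun _ => rfl)]
  exact hgraded _ _ hle

lemma totalDegree_le_of_lmon_le
    (hgraded : ∀ a b : Fin m →₀ ℕ, ord.le a b → ∑ x, a x ≤ ∑ x, b x)
    {f g : MvPolynomial (Fin m) K} (h : ord.le (lmon ord f) (lmon ord g)) :
    f.totalDegree ≤ g.totalDegree :=
  (totalDegree_le_sum_lmon ord hgraded f).trans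
    ((hgraded _ _ h).trans (sum_lmon_le_totalDegree ord g))

lemma totalDegree_monomial_sup_sub_lmon_mul_le (f g : MvPolynomial (Fin m) K) (c : K) :
    (monomial ((lmon ord f ⊔ lmon ord g) - lmon ord f) c * f).totalDegree
      ≤ f.totalDegree + g.totalDegree := by
  have hdiv : (lmon ord f ⊔ lmon ord g) - lmon ord f ≤ lmon ord g :=
    tsub_le_iff_left.mpr (sup_le le_self_add le_add_self)
  calc (monomial ((lmon ord f ⊔ lmon ord g) - lmon ord f) c * f).totalDegree
      ≤ (monomial ((lmon ord f ⊔ lmon ord g) - lmon ord f) c).totalDegree + f.totalDegree :=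
        totalDegree_mul _ _
    _ ≤ ∑ x, lmon ord g x + f.totalDegree := by
        gcongr
        refine (totalDegree_monomial_le _ _).trans ?_
        rw [Finsupp.sum_fintype _ _ (fun _ => rfl)]
        exact Finset.sum_le_sum fun x _ => hdiv x
    _ ≤ f.totalDegree + g.totalDegree := by
        rw [add_comm]; gcongr; exact sum_lmon_le_totalDegree ord g

lemma totalDegree_spoly_le (f g : MvPolynomial (Fin m) K) :
    (spoly ord f g).totalDegree ≤ f.totalDegree + g.totalDegree := by
  refine (totalDegree_sub _ _).trans (max_le
    (totalDegree_monomial_sup_sub_lmon_mul_le ord f g _) ?_)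
  rw [sup_comm, add_comm]
  exact totalDegree_monomial_sup_sub_lmon_mul_le ord g f _

lemma totalDegree_le_of_isRemainder
    (hgraded : ∀ a b : Fin m →₀ ℕ, ord.le a b → ∑ x, a x ≤ ∑ x, b x)
    {f r : MvPolynomial (Fin m) K} {B : Finset (MvPolynomial (Fin m) K)}
    (h : IsRemainder ord f B r) :
    r.totalDegree ≤ f.totalDegree := by
  obtain ⟨a, hf, hlm, -⟩ := h
  have hterm : ∀ g ∈ B, (a g * g).totalDegree ≤ f.totalDegree := by
    intro g hg
    by_cases h0 : a g * g = 0
    · simp [h0]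
    · exact totalDegree_le_of_lmon_le ord hgraded (hlm g hg h0)
  rw [eq_sub_of_add_eq' hf.symm]
  exact (totalDegree_sub _ _).trans
    (max_le le_rfl ((totalDegree_finsetSum _ _).trans (Finset.sup_le hterm)))

end

theorem stmt_14_general {K : Type*} [Field K] (m : ℕ)
    (ord : LinearOrder (Fin m →₀ ℕ))
    (hgraded : ∀ a b : Fin m →₀ ℕ, ord.le a b → (∑ x, a x) ≤ ∑ x, b x)
    (d : ℕ)
    (F : Finset (MvPolynomial (Fin m) K))
    (hFd : ∀ g ∈ F, g.totalDegree ≤ d)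
    (B : ℕ → Finset (MvPolynomial (Fin m) K))
    (hB0 : B 0 = F)
    (hstep : ∀ (n : ℕ) (b : MvPolynomial (Fin m) K),
      b ∈ B (n + 1) ↔ b ∈ B n ∨
        (b ≠ 0 ∧ ∃ p ∈ B n, ∃ q ∈ B n, IsRemainder ord (spoly ord p q) (B n) b)) :
    ∀ n : ℕ, ∀ b ∈ B n,
      (∑ x, lmon ord b x) ≤ 3 ^ n * d ∧ b.totalDegree ≤ 3 ^ n * d := by
  suffices hdeg : ∀ n, ∀ b ∈ B n, b.totalDegree ≤ 3 ^ n * d from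
    fun n b hb => ⟨(sum_lmon_le_totalDegree ord b).trans (hdeg n b hb), hdeg n b hb⟩
  intro n
  induction n with
  | zero => simpa [hB0] using hFd
  | succ n ih =>
    intro b hb
    rcases (hstep n b).mp hb with hb | ⟨-, p, hp, q, hq, hrem⟩
    · exact (ih b hb).trans (by gcongr <;> omega)
    · calc b.totalDegree ≤ (spoly ord p q).totalDegree :=
            totalDegree_le_of_isRemainder ord hgraded hrem
        _ ≤ p.totalDegree + q.totalDegree := totalDegree_spoly_le ord p q
        _ ≤ 3 ^ n * d + 3 ^ n * d := add_le_add (ih p hp) (ih q hq)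
        _ ≤ 3 ^ (n + 1) * d := by rw [pow_succ, mul_right_comm]; omega

theorem stmt_14 {K : Type*} [Field K] (m : ℕ)
    (ord : LinearOrder (Fin m →₀ ℕ))
    (hzero : ∀ a : Fin m →₀ ℕ, ord.le 0 a)
    (hadd : ∀ a b c : Fin m →₀ ℕ, ord.le a b → ord.le (a + c) (b + c))
    (hgraded : ∀ a b : Fin m →₀ ℕ, ord.le a b → (∑ x, a x) ≤ ∑ x, b x)
    (d : ℕ) (hd : 1 ≤ d)
    (F : Finset (MvPolynomial (Fin m) K)) (hF0 : (0 : MvPolynomial (Fin m) K) ∉ F)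
    (hFd : ∀ g ∈ F, g.totalDegree ≤ d)
    (B : ℕ → Finset (MvPolynomial (Fin m) K))
    (hB0 : B 0 = F)
    (hstep : ∀ (n : ℕ) (b : MvPolynomial (Fin m) K),
      b ∈ B (n + 1) ↔ b ∈ B n ∨
        (b ≠ 0 ∧ ∃ p ∈ B n, ∃ q ∈ B n, IsRemainder ord (spoly ord p q) (B n) b)) :
    ∀ n : ℕ, ∀ b ∈ B n,
      (∑ x, lmon ord b x) ≤ 3 ^ n * d ∧ b.totalDegree ≤ 3 ^ n * d :=
  stmt_14_general m ord hgraded d F hFd B hB0 hstep
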